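/- arXiv:math/0602417 — 4 statements merged into one kernel-verified Lean document; each statement's English description precedes it below -/
import Mathlib

section
/- Let λ ∈ P⁰₊ be a level-zero dominant integral weight, w ∈ W, j ∈ I. If the real root w⁻¹(α_j) lies in −a₀⁻¹ Q̄₊ + a₀⁻¹ Z δ, then (w(cl(λ)))(h_j) ≤ 0. Moreover, if λ is strictly level-zero dominant (λ(h_j) > 0 for all j ∈ I₀), then (w(cl(λ)))(h_j) < 0 if and only if w⁻¹(α_j) ∈ −a₀⁻¹ Q̄₊ + a₀⁻¹ Z δ. -/
/-- If the real root `w⁻¹(α_j)` lies in `-a₀⁻¹ Q̄₊ + a₀⁻¹ ℤ δ` then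
`(w(cl λ))(h_j) ≤ 0`; and for strictly level-zero dominant `λ` the two
conditions `(w(cl λ))(h_j) < 0` and `w⁻¹(α_j) ∈ -a₀⁻¹ Q̄₊ + a₀⁻¹ ℤ δ`
are equivalent. -/
theorem stmt_3
    {H : Type*} [AddCommGroup H] [Module ℚ H]
    {I : Type*} [Fintype I] (i0 : I)
    (α : I → H) (δ : H) (a0 : ℕ) (ha0 : 0 < a0)
    (B : H →ₗ[ℚ] H →ₗ[ℚ] ℚ)
    (hBsymm : ∀ x y, B x y = B y x)
    (W : Subgroup (H ≃ₗ[ℚ] H))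
    (hWinv : ∀ w ∈ W, ∀ x y : H, B (w x) (w y) = B x y)
    (pair : H → I → ℚ)
    (hpair : ∀ (μ : H) (j : I), pair μ j = 2 * B μ (α j) / B (α j) (α j))
    (hαα : ∀ j, 0 < B (α j) (α j))
    (QbarPos : Set H)
    (hQbar : QbarPos = {β | ∃ m : I → ℕ, m i0 = 0 ∧ β = ∑ j, (m j : ℚ) • α j})
    (lam : H)
    (hlamdom : ∀ β ∈ QbarPos, 0 ≤ B lam β)
    (hlamδ : B lam δ = 0)
    (w : H ≃ₗ[ℚ] H) (hw : w ∈ W) (j : I)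
    (Spos Sneg : Set H)
    (hSpos : Spos = {x | ∃ β ∈ QbarPos, ∃ k : ℤ,
        x = (a0 : ℚ)⁻¹ • β + ((k : ℚ) * (a0 : ℚ)⁻¹) • δ})
    (hSneg : Sneg = {x | ∃ β ∈ QbarPos, ∃ k : ℤ,
        x = -((a0 : ℚ)⁻¹ • β) + ((k : ℚ) * (a0 : ℚ)⁻¹) • δ})
    (hreal : w.symm (α j) ∈ Spos ∪ Sneg)
    (hnotδ : ∀ k : ℤ, w.symm (α j) ≠ ((k : ℚ) * (a0 : ℚ)⁻¹) • δ) :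
    (w.symm (α j) ∈ Sneg → pair (w lam) j ≤ 0) ∧
    ((∀ j', j' ≠ i0 → 0 < pair lam j') →
      (pair (w lam) j < 0 ↔ w.symm (α j) ∈ Sneg)) := by

  have hinv : ∀ x : H, B (w lam) x = B lam (w.symm x) := by
    intro x
    have h := hWinv w hw lam (w.symm x)
    simpa using h
  have hBjj := hαα j
  have ha0' : (0:ℚ) < (a0:ℚ)⁻¹ := by positivity
  have hpw : pair (w lam) j = 2 * B lam (w.symm (α j)) / B (α j) (α j) := by
    rw [hpair, hinv]
  -- value on Sneg
  have hSnegval : w.symm (α j) ∈ Sneg → ∃ β ∈ QbarPos,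
      B lam (w.symm (α j)) = -((a0:ℚ)⁻¹ * B lam β) ∧ (∃ k : ℤ, w.symm (α j) = -((a0 : ℚ)⁻¹ • β) + ((k : ℚ) * (a0 : ℚ)⁻¹) • δ) := by
    intro hx
    rw [hSneg] at hx
    obtain ⟨β, hβ, k, hk⟩ := hx
    refine ⟨β, hβ, ?_, k, hk⟩
    rw [hk]
    simp [map_add, map_neg, map_smul, hlamδ, smul_eq_mul]
  have hSposval : w.symm (α j) ∈ Spos → 0 ≤ B lam (w.symm (α j)) := by
    intro hx
    rw [hSpos] at hx
    obtain ⟨β, hβ, k, hk⟩ := hx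
    rw [hk]
    have := hlamdom β hβ
    simp only [map_add, map_smul, hlamδ, smul_eq_mul, mul_zero, add_zero]
    positivity
  have hle : w.symm (α j) ∈ Sneg → pair (w lam) j ≤ 0 := by
    intro hx
    obtain ⟨β, hβ, hval, _⟩ := hSnegval hx
    have h1 := hlamdom β hβ
    rw [hpw, hval]
    apply div_nonpos_of_nonpos_of_nonneg
    · nlinarith
    · exact le_of_lt hBjj
  refine ⟨hle, fun hstrict => ⟨?_, ?_⟩⟩
  · -- pair < 0 → Sneg
    intro hlt
    rcases hreal with hx | hx
    · exfalso
      have := hSposval hx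
      rw [hpw] at hlt
      have : (0:ℚ) ≤ 2 * B lam (w.symm (α j)) / B (α j) (α j) := by positivity
      linarith
    · exact hx
  · -- Sneg → pair < 0
    intro hx
    obtain ⟨β, hβ, hval, k, hk⟩ := hSnegval hx
    -- show 0 < B lam β
    have hβ' := hβ
    rw [hQbar] at hβ'
    obtain ⟨m, hm0, hmβ⟩ := hβ'
    have hterm : ∀ j' : I, 0 ≤ (m j' : ℚ) * B lam (α j') := by
      intro j'
      by_cases h : j' = i0
      · subst h; rw [hm0]; simp
      · have hp := hstrict j' h
        rw [hpair] at hp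
        have hjj := hαα j'
        have : 0 < B lam (α j') := by
          by_contra hc
          push_neg at hc
          have : 2 * B lam (α j') / B (α j') (α j') ≤ 0 :=
            div_nonpos_of_nonpos_of_nonneg (by linarith) (le_of_lt hjj)
          linarith
        positivity
    have hBβ : B lam β = ∑ j', (m j' : ℚ) * B lam (α j') := by
      rw [hmβ, map_sum]
      simp [smul_eq_mul]
    have hpos : 0 < B lam β := by
      rcases lt_or_eq_of_le (Finset.sum_nonneg (fun j' _ => hterm j') : (0:ℚ) ≤ ∑ j', (m j' : ℚ) * B lam (α j')) with h | h
      · rw [hBβ]; exact h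
      · exfalso
        -- each term is zero, so each m j' = 0 or B lam (α j') = 0; for j' ≠ i0, B > 0 so m = 0
        have hzero : ∀ j' ∈ Finset.univ, (m j' : ℚ) * B lam (α j') = 0 :=
          (Finset.sum_eq_zero_iff_of_nonneg (fun j' _ => hterm j')).mp h.symm
        have hmall : ∀ j', (m j' : ℚ) = 0 := by
          intro j'
          by_cases hc : j' = i0
          · subst hc; rw [hm0]; simp
          · have hp := hstrict j' hc
            rw [hpair] at hp
            have hjj := hαα j'
            have hBpos : 0 < B lam (α j') := by
              by_contra hcc
              push_neg at hcc
              have : 2 * B lam (α j') / B (α j') (α j') ≤ 0 :=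
                div_nonpos_of_nonpos_of_nonneg (by linarith) (le_of_lt hjj)
              linarith
            have := hzero j' (Finset.mem_univ j')
            rcases mul_eq_zero.mp this with h1 | h1
            · exact h1
            · linarith
        have hβ0 : β = 0 := by
          rw [hmβ]
          apply Finset.sum_eq_zero
          intro j' _
          rw [hmall j', zero_smul]
        apply hnotδ k
        rw [hk, hβ0]
        simp
    rw [hpw, hval]
    apply div_neg_of_neg_of_pos _ hBjj
    nlinarith
end

section
/- Let λ ∈ P⁰₊ be level-zero dominant and π ∈ B(λ) an LS path of shape λ. If the initial direction ι(π) ∈ Wλ of π lies in λ − Q̄₊, then the endpoint π(1) ∈ P can be written uniquely in the form π(1) = λ − a₀⁻¹β + a₀⁻¹Kδ with β ∈ Q̄₊ and K ∈ Z≥0 (i.e., the coefficient of δ is nonnegative). -/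
/-!
Write each direction as `ν u = λ - β u + k u d_λ δ`. The endpoint is the convex combination
with weights `c u = σ (u+1) - σ u > 0`, so it equals `λ - ∑ c u β u + (∑ c u k u d_λ) δ`.
Since `k` vanishes at the initial direction and grows along the chain, the `δ`-coefficient is
nonnegative. A positive integer multiple of `∑ c u β u` lies in `Q̄₊`, so uniqueness of the
representation forces `K = a₀ ∑ c u k u d_λ ≥ 0`.
-/

open Finset

theorem Fin.sum_univ_succ_sub_castSucc {M : Type*} [AddCommGroup M] {n : ℕ}
    (f : Fin (n + 1) → M) :
    ∑ i : Fin n, (f i.succ - f i.castSucc) = f (Fin.last n) - f 0 := by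
  rw [sum_sub_distrib, sub_eq_sub_iff_add_eq_add, add_comm, ← Fin.sum_univ_succ,
    Fin.sum_univ_castSucc, add_comm]

theorem sum_smul_sub_add_smul_of_sum_eq_one {R H ι : Type*} [CommRing R] [AddCommGroup H]
    [Module R H] [Fintype ι] {c : ι → R} (hc : ∑ i, c i = 1) (lam δ : H) (β : ι → H) (k : ι → R) :
    ∑ i, c i • (lam - β i + k i • δ) = lam - ∑ i, c i • β i + (∑ i, c i * k i) • δ := by
  simp only [smul_add, smul_sub, smul_smul, sum_add_distrib, sum_sub_distrib, ← sum_smul, hc,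
    one_smul]

namespace AddSubmonoid

variable {H : Type*}

def nsmulHull [AddCommMonoid H] (S : AddSubmonoid H) : AddSubmonoid H where
  carrier := {x | ∃ n : ℕ, 0 < n ∧ n • x ∈ S}
  zero_mem' := ⟨1, one_pos, by simp⟩
  add_mem' := by
    rintro x y ⟨m, hm, hmx⟩ ⟨n, hn, hny⟩
    refine ⟨m * n, mul_pos hm hn, ?_⟩
    rw [smul_add]
    exact S.add_mem (by rw [mul_nsmul]; exact S.nsmul_mem hmx n)
      (by rw [mul_comm, mul_nsmul]; exact S.nsmul_mem hny m)

theorem le_nsmulHull [AddCommMonoid H] (S : AddSubmonoid H) : S ≤ S.nsmulHull :=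
  fun x hx => ⟨1, one_pos, by simpa using hx⟩

theorem rat_smul_mem_nsmulHull [AddCommGroup H] [Module ℚ H] (S : AddSubmonoid H) {q : ℚ}
    (hq : 0 ≤ q) {x : H} (hx : x ∈ S.nsmulHull) : q • x ∈ S.nsmulHull := by
  obtain ⟨n, hn, hnx⟩ := hx
  refine ⟨q.den * n, mul_pos q.pos hn, ?_⟩
  have hnum : ((q.num.toNat : ℕ) : ℚ) = q.den * q := by
    have := Int.toNat_of_nonneg (Rat.num_nonneg.2 hq)
    rw [Rat.den_mul_eq_num]
    exact_mod_cast this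
  rw [← Nat.cast_smul_eq_nsmul ℚ, smul_smul, Nat.cast_mul, mul_right_comm, ← hnum, ← smul_smul,
    Nat.cast_smul_eq_nsmul, Nat.cast_smul_eq_nsmul]
  exact S.nsmul_mem hnx _

end AddSubmonoid

section

variable {H : Type*} [AddCommGroup H] [Module ℚ H]

def qbarPos {I : Type*} [Fintype I] (α : I → H) (i0 : I) : AddSubmonoid H where
  carrier := {β | ∃ m : I → ℕ, m i0 = 0 ∧ β = ∑ j, (m j : ℚ) • α j}
  zero_mem' := ⟨0, rfl, by simp⟩
  add_mem' := by
    rintro _ _ ⟨m, hm, rfl⟩ ⟨m', hm', rfl⟩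
    exact ⟨m + m', by simp [hm, hm'], by simp [add_smul, sum_add_distrib]⟩

theorem eq_mul_of_unique_rep_of_mem_nsmulHull (S : AddSubmonoid H) {a : ℕ} (ha : a ≠ 0)
    {lam δ : H}
    (hrep : ∀ β ∈ S, ∀ β' ∈ S, ∀ k k' : ℚ,
        lam - (a : ℚ)⁻¹ • β + (k * (a : ℚ)⁻¹) • δ =
          lam - (a : ℚ)⁻¹ • β' + (k' * (a : ℚ)⁻¹) • δ → β = β' ∧ k = k')
    {β B : H} {K C : ℚ} (hβ : β ∈ S) (hB : B ∈ S.nsmulHull)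
    (h : lam - (a : ℚ)⁻¹ • β + (K * (a : ℚ)⁻¹) • δ = lam - B + C • δ) : K = a * C := by
  obtain ⟨n, hn, hnB⟩ := hB
  have ha' : (a : ℚ) ≠ 0 := Nat.cast_ne_zero.2 ha
  have hn' : (n : ℚ) ≠ 0 := Nat.cast_ne_zero.2 hn.ne'
  have hscaled : lam - (a : ℚ)⁻¹ • (n • β) + (n * K * (a : ℚ)⁻¹) • δ =
      lam - (a : ℚ)⁻¹ • (a • n • B) + (a * n * C * (a : ℚ)⁻¹) • δ := by
    rw [show (a : ℚ) * n * C * (a : ℚ)⁻¹ = n * C by field_simp]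
    simp only [← Nat.cast_smul_eq_nsmul ℚ, smul_smul, inv_mul_cancel_left₀ ha']
    linear_combination (norm := module) (n : ℚ) • h
  have hK := (hrep _ (S.nsmul_mem hβ n) _ (S.nsmul_mem hnB a) _ _ hscaled).2
  apply mul_left_cancel₀ hn'
  linear_combination hK

end

/-- If an LS path `π` of shape `λ` has initial direction in `λ - Q̄₊`, then its
endpoint `π(1)` is uniquely of the form `λ - a₀⁻¹ β + a₀⁻¹ K δ` with
`β ∈ Q̄₊` and `K ∈ ℤ≥0`. -/
theorem stmt_5
    {H : Type*} [AddCommGroup H] [Module ℚ H]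
    {I : Type*} [Fintype I] (i0 : I)
    (α : I → H) (δ : H) (a0 : ℕ) (ha0 : 0 < a0)
    (QbarPos : Set H)
    (hQbar : QbarPos = {β | ∃ m : I → ℕ, m i0 = 0 ∧ β = ∑ j, (m j : ℚ) • α j})
    (lam : H) (dlam : ℤ) (hdlam : 0 < dlam)
    (orb : Set H)
    (decompβ : H → H) (decompk : H → ℤ)
    (hdecomp : ∀ ν ∈ orb, decompβ ν ∈ QbarPos ∧
        ν = lam - decompβ ν + ((decompk ν * dlam : ℤ) : ℚ) • δ)
    (hdecompUnique : ∀ ν ∈ orb, ∀ β ∈ QbarPos, ∀ k : ℤ,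
        ν = lam - β + ((k * dlam : ℤ) : ℚ) • δ → β = decompβ ν ∧ k = decompk ν)
    (le : H → H → Prop)
    (hle : ∀ ν ν', ν ∈ orb → ν' ∈ orb → le ν' ν → decompk ν ≤ decompk ν')
    (s : ℕ) (hs : 0 < s)
    (ν : Fin s → H) (σ : Fin (s + 1) → ℚ)
    (hσ0 : σ 0 = 0) (hσ1 : σ (Fin.last s) = 1) (hσmono : StrictMono σ)
    (hνorb : ∀ u, ν u ∈ orb)
    (hchain : ∀ u u' : Fin s, u ≤ u' → le (ν u') (ν u))
    (hinit : ∃ β ∈ QbarPos, ν ⟨0, hs⟩ = lam - β)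
    (endpt : H)
    (hend : endpt = ∑ u : Fin s, (σ u.succ - σ u.castSucc) • ν u)
    (hrep : ∀ β ∈ QbarPos, ∀ β' ∈ QbarPos, ∀ k k' : ℚ,
        lam - (a0 : ℚ)⁻¹ • β + (k * (a0 : ℚ)⁻¹) • δ =
          lam - (a0 : ℚ)⁻¹ • β' + (k' * (a0 : ℚ)⁻¹) • δ → β = β' ∧ k = k')
    (hendform : ∃ β ∈ QbarPos, ∃ K : ℤ,
        endpt = lam - (a0 : ℚ)⁻¹ • β + ((K : ℚ) * (a0 : ℚ)⁻¹) • δ) :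
    ∃! bK : H × ℤ, bK.1 ∈ QbarPos ∧ 0 ≤ bK.2 ∧
      endpt = lam - (a0 : ℚ)⁻¹ • bK.1 + ((bK.2 : ℚ) * (a0 : ℚ)⁻¹) • δ := by
  obtain rfl : QbarPos = qbarPos α i0 := hQbar
  set c : Fin s → ℚ := fun u => σ u.succ - σ u.castSucc
  have hc_pos : ∀ u, 0 < c u := fun u => sub_pos.2 (hσmono u.castSucc_lt_succ)
  have hc_sum : ∑ u, c u = 1 := by
    rw [Fin.sum_univ_succ_sub_castSucc, hσ1, hσ0, sub_zero]
  obtain ⟨β₀, hβ₀, hν₀⟩ := hinit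
  have hk₀ : decompk (ν ⟨0, hs⟩) = 0 :=
    (hdecompUnique _ (hνorb _) β₀ hβ₀ 0 (by simp [hν₀])).2.symm
  have hk_nonneg : ∀ u, 0 ≤ decompk (ν u) := fun u =>
    hk₀ ▸ hle _ _ (hνorb _) (hνorb u) (hchain _ u (Fin.mk_le_of_le_val (Nat.zero_le _)))
  have hend' : endpt = lam - ∑ u, c u • decompβ (ν u) +
      (∑ u, c u * ((decompk (ν u) * dlam : ℤ) : ℚ)) • δ := by
    rw [hend, ← sum_smul_sub_add_smul_of_sum_eq_one hc_sum]
    exact sum_congr rfl fun u _ => congrArg (c u • ·) (hdecomp _ (hνorb u)).2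
  have hB : ∑ u, c u • decompβ (ν u) ∈ (qbarPos α i0).nsmulHull :=
    sum_mem fun u _ => (qbarPos α i0).rat_smul_mem_nsmulHull (hc_pos u).le
      ((qbarPos α i0).le_nsmulHull (hdecomp _ (hνorb u)).1)
  obtain ⟨β, hβ, K, hK⟩ := hendform
  have hKC :=
    eq_mul_of_unique_rep_of_mem_nsmulHull _ ha0.ne' hrep hβ hB (hK.symm.trans hend')
  refine ⟨(β, K), ⟨hβ, ?_, hK⟩, ?_⟩
  · have : (0 : ℚ) ≤ K := hKC ▸ mul_nonneg (Nat.cast_nonneg _) (sum_nonneg fun u _ =>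
      mul_nonneg (hc_pos u).le (by exact_mod_cast mul_nonneg (hk_nonneg u) hdlam.le))
    exact_mod_cast this
  · rintro ⟨β', K'⟩ ⟨hβ', -, hK'⟩
    obtain ⟨rfl, h⟩ := hrep β' hβ' β hβ K' K (hK'.symm.trans hK)
    exact Prod.ext rfl (by exact_mod_cast h)
end

section
/- Let λ ∈ P and η ∈ B(λ)_cl with initial direction ι(η) ∈ P_cl. If j ∈ I satisfies (ι(η))(h_j) < 0, then e_j η ≠ 0. Moreover, ι(e_j^l η) = ι(η) for all 0 ≤ l ≤ ε_j(η) − 1, and if (ι(η))(h_j) ≤ 0 then ι(e_j^max η) = r_j(ι(η)). -/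
def iterOpt {β : Type*} (g : β → Option β) : ℕ → β → Option β
  | 0, b => some b
  | n + 1, b => (iterOpt g n b).bind g

theorem iterOpt_add {β : Type*} (g : β → Option β) (n m : ℕ) (b : β) :
    iterOpt g (n + m) b = (iterOpt g n b).bind (iterOpt g m) := by
  induction m with
  | zero => cases hc : iterOpt g n b <;> simp [iterOpt, hc]
  | succ m ih =>
      rw [← Nat.add_assoc]
      simp only [iterOpt, ih, Option.bind_assoc]

/-- Behavior of initial directions under the raising root operator `e_j` on
`B(λ)_cl`: if `(ι(η))(h_j) < 0` then `e_j η ≠ 0`; `ι(e_j^l η) = ι(η)` for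
`l ≤ ε_j(η) - 1`; and if `(ι(η))(h_j) ≤ 0` then `ι(e_j^max η) = r_j(ι(η))`. -/
theorem stmt_12
    {Hc : Type*} [AddCommGroup Hc] [Module ℝ Hc]
    {I : Type*} (j : I)
    (pair : I → Hc →ₗ[ℝ] ℝ)            -- `pair j x = x(h_j)`
    (rj : I → Hc →ₗ[ℝ] Hc)              -- simple reflections
    (clα : I → Hc)
    (hrj : ∀ x, rj j x = x - pair j x • clα j)
    (Bcl : Set (ℝ → Hc))
    (E : (ℝ → Hc) → Option (ℝ → Hc))     -- the raising operator `e_j`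
    (hEcl : ∀ ψ ∈ Bcl, ∀ ψ', E ψ = some ψ' → ψ' ∈ Bcl)
    (ιf : (ℝ → Hc) → Hc)                 -- initial directions
    (hι : ∀ ψ ∈ Bcl, ∃ t > (0:ℝ), ∀ s, 0 ≤ s → s ≤ t → ψ s = s • ιf ψ)
    (minH : (ℝ → Hc) → ℝ)
    (hmin : ∀ ψ ∈ Bcl,
        IsLeast {v : ℝ | ∃ t, 0 ≤ t ∧ t ≤ 1 ∧ v = pair j (ψ t)} (minH ψ))
    (ε : (ℝ → Hc) → ℕ)
    (hε : ∀ ψ ∈ Bcl, (ε ψ : ℝ) = -minH ψ)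
    (hεiter : ∀ ψ ∈ Bcl, ∀ l : ℕ, iterOpt E l ψ ≠ none ↔ l ≤ ε ψ)
    (hEform : ∀ ψ ∈ Bcl, ∀ ψ', E ψ = some ψ' →
      ∃ t1 t0 : ℝ,
        IsLeast {t : ℝ | 0 ≤ t ∧ t ≤ 1 ∧ pair j (ψ t) = minH ψ} t1 ∧
        IsGreatest {t : ℝ | 0 ≤ t ∧ t ≤ t1 ∧ pair j (ψ t) = minH ψ + 1} t0 ∧
        (∀ t, 0 ≤ t → t ≤ t0 → ψ' t = ψ t) ∧
        (∀ t, t0 ≤ t → t ≤ t1 → ψ' t = ψ t0 + rj j (ψ t - ψ t0)) ∧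
        (∀ t, t1 ≤ t → t ≤ 1 → ψ' t = ψ t + clα j))
    (η : ℝ → Hc) (hη : η ∈ Bcl) :
    (pair j (ιf η) < 0 → E η ≠ none) ∧
    (∀ l : ℕ, l < ε η → ∀ ψ, iterOpt E l η = some ψ → ιf ψ = ιf η) ∧
    (pair j (ιf η) ≤ 0 → ∀ ψ, iterOpt E (ε η) η = some ψ →
        ιf ψ = rj j (ιf η)) := by
  classical
  -- ψ 0 = 0 for ψ ∈ Bcl
  have hzero : ∀ ψ ∈ Bcl, ψ 0 = 0 := by
    intro ψ hψ
    obtain ⟨t, ht, hlin⟩ := hι ψ hψ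
    simpa using hlin 0 le_rfl ht.le
  -- the initial direction is determined by the path near 0
  have hdir : ∀ ψ ∈ Bcl, ∀ v : Hc,
      (∃ c > (0:ℝ), ∀ s, 0 < s → s ≤ c → ψ s = s • v) → ιf ψ = v := by
    intro ψ hψ v ⟨c, hc, hv⟩
    obtain ⟨t, ht, hlin⟩ := hι ψ hψ
    have hs : (0:ℝ) < min c t := lt_min hc ht
    have h1 := hlin (min c t) hs.le (min_le_right _ _)
    have h2 := hv (min c t) hs (min_le_left _ _)
    have h3 : (min c t) • ιf ψ = (min c t) • v := by rw [← h1, h2]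
    have := congrArg (fun z => (min c t)⁻¹ • z) h3
    simpa [inv_smul_smul₀ hs.ne'] using this
  -- membership along iterations
  have hmem : ∀ l : ℕ, ∀ ψ, iterOpt E l η = some ψ → ψ ∈ Bcl := by
    intro l
    induction l with
    | zero =>
        intro ψ h
        simp only [iterOpt, Option.some.injEq] at h
        exact h ▸ hη
    | succ l ih =>
        intro ψ' h
        simp only [iterOpt] at h
        cases hc : iterOpt E l η with
        | none => rw [hc] at h; simp at h
        | some ψ =>
            rw [hc] at h
            simp only [Option.bind_some] at h
            exact hEcl ψ (ih ψ hc) ψ' h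
  -- ε shifts by l along iterations
  have hεshift : ∀ l : ℕ, ∀ ψ, iterOpt E l η = some ψ → ε ψ + l = ε η := by
    intro l ψ h
    have hψ := hmem l ψ h
    have key2 : ∀ m : ℕ, iterOpt E (l + m) η = iterOpt E m ψ := by
      intro m; rw [iterOpt_add, h, Option.bind_some]
    have h1 : l + ε ψ ≤ ε η := by
      refine (hεiter η hη (l + ε ψ)).mp ?_
      rw [key2]
      exact (hεiter ψ hψ (ε ψ)).mpr le_rfl
    have h2 : l ≤ ε η := (hεiter η hη l).mp (by rw [h]; exact Option.some_ne_none _)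
    have h3 : ε η - l ≤ ε ψ := by
      refine (hεiter ψ hψ (ε η - l)).mp ?_
      rw [← key2]
      exact (hεiter η hη (l + (ε η - l))).mpr (by omega)
    omega
  -- positivity of pairing direction from minH = 0
  have hnonneg : ∀ ψ ∈ Bcl, minH ψ = 0 → 0 ≤ pair j (ιf ψ) := by
    intro ψ hψ h0
    obtain ⟨t, ht, hlin⟩ := hι ψ hψ
    have hs : (0:ℝ) < min t 1 := lt_min ht one_pos
    have hle : minH ψ ≤ pair j (ψ (min t 1)) :=
      (hmin ψ hψ).2 ⟨min t 1, hs.le, min_le_right _ _, rfl⟩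
    rw [h0, hlin (min t 1) hs.le (min_le_left _ _), map_smul, smul_eq_mul] at hle
    by_contra hneg
    push_neg at hneg
    nlinarith
  -- single raising step with ε ψ ≥ 2 preserves the initial direction
  have hstep : ∀ ψ ∈ Bcl, ∀ ψ', E ψ = some ψ' → 2 ≤ ε ψ → ιf ψ' = ιf ψ := by
    intro ψ hψ ψ' hE h2
    have hψ' : ψ' ∈ Bcl := hEcl ψ hψ ψ' hE
    obtain ⟨t1, t0, ht1, ht0, heq0, _, _⟩ := hEform ψ hψ ψ' hE
    obtain ⟨ht00, ht0t1, hpt0⟩ := ht0.1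
    have hmH : (ε ψ : ℝ) = -minH ψ := hε ψ hψ
    have hcast : (2:ℝ) ≤ (ε ψ : ℝ) := by exact_mod_cast h2
    have hneg : pair j (ψ t0) < 0 := by rw [hpt0]; linarith
    have ht0pos : 0 < t0 := by
      rcases eq_or_lt_of_le ht00 with h | h
      · exfalso
        rw [← h, hzero ψ hψ, map_zero] at hneg
        exact lt_irrefl 0 hneg
      · exact h
    obtain ⟨t, ht, hlin⟩ := hι ψ hψ
    refine hdir ψ' hψ' (ιf ψ) ⟨min t t0, lt_min ht ht0pos, fun s hs hsc => ?_⟩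
    rw [heq0 s hs.le (hsc.trans (min_le_right _ _)),
      hlin s hs.le (hsc.trans (min_le_left _ _))]
  -- part 2
  have hpres : ∀ l : ℕ, l < ε η → ∀ ψ, iterOpt E l η = some ψ → ιf ψ = ιf η := by
    intro l
    induction l with
    | zero =>
        intro _ ψ h
        simp only [iterOpt, Option.some.injEq] at h
        rw [← h]
    | succ l ih =>
        intro hl ψ' h
        have hsave := h
        simp only [iterOpt] at h
        cases hc : iterOpt E l η with
        | none => rw [hc] at h; simp at h
        | some ψ =>
            rw [hc] at h
            simp only [Option.bind_some] at h
            have hψ := hmem l ψ hc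
            have hε2 : 2 ≤ ε ψ := by
              have := hεshift l ψ hc
              omega
            rw [hstep ψ hψ ψ' h hε2]
            exact ih (by omega) ψ hc
  refine ⟨?_, hpres, ?_⟩
  -- part 1
  · intro hlt
    obtain ⟨t, ht, hlin⟩ := hι η hη
    have hs : (0:ℝ) < min t 1 := lt_min ht one_pos
    have hle : minH η ≤ pair j (η (min t 1)) :=
      (hmin η hη).2 ⟨min t 1, hs.le, min_le_right _ _, rfl⟩
    rw [hlin (min t 1) hs.le (min_le_left _ _), map_smul, smul_eq_mul] at hle
    have hmHneg : minH η < 0 := lt_of_le_of_lt hle (by nlinarith)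
    have hεpos : 1 ≤ ε η := by
      by_contra hcon
      push_neg at hcon
      interval_cases h : ε η
      · have := hε η hη
        rw [h] at this
        simp at this
        linarith
    have h1 : iterOpt E 1 η ≠ none := (hεiter η hη 1).mpr hεpos
    simpa [iterOpt] using h1
  -- part 3
  · intro hle0 ψ' hiter
    rcases Nat.eq_zero_or_pos (ε η) with h0 | hpos
    · -- ε η = 0 : ψ' = η and pair j (ιf η) = 0
      rw [h0] at hiter
      simp only [iterOpt, Option.some.injEq] at hiter
      have hmH0 : minH η = 0 := by
        have := hε η hη
        rw [h0] at this
        simpa using this.symm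
      have h00 : pair j (ιf η) = 0 := le_antisymm hle0 (hnonneg η hη hmH0)
      rw [← hiter, hrj, h00, zero_smul, sub_zero]
    · -- ε η ≥ 1
      obtain ⟨K, hK⟩ : ∃ K, ε η = K + 1 := ⟨ε η - 1, by omega⟩
      have hε' : ε ψ' + ε η = ε η := hεshift (ε η) ψ' hiter
      have hεψ'0 : ε ψ' = 0 := by omega
      rw [hK] at hiter
      simp only [iterOpt] at hiter
      cases hc : iterOpt E K η with
      | none => rw [hc] at hiter; simp at hiter
      | some ψ =>
          rw [hc] at hiter
          simp only [Option.bind_some] at hiter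
          have hψ : ψ ∈ Bcl := hmem K ψ hc
          have hψ' : ψ' ∈ Bcl := hEcl ψ hψ ψ' hiter
          have hιψ : ιf ψ = ιf η := hpres K (by omega) ψ hc
          have hεψ1 : ε ψ = 1 := by
            have := hεshift K ψ hc
            omega
          have hmHψ : minH ψ = -1 := by
            have := hε ψ hψ
            rw [hεψ1] at this
            push_cast at this
            linarith
          have hmHψ' : minH ψ' = 0 := by
            have := hε ψ' hψ'
            rw [hεψ'0] at this
            simpa using this.symm
          obtain ⟨t1, t0, ht1, ht0, heq0, heqmid, _⟩ := hEform ψ hψ ψ' hiter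
          obtain ⟨ht00, ht0t1, hpt0⟩ := ht0.1
          obtain ⟨ht10, ht11, hpt1⟩ := ht1.1
          obtain ⟨t, ht, hlin⟩ := hι ψ hψ
          rcases eq_or_lt_of_le ht00 with hc0 | hc0
          · -- t0 = 0 : the reflection acts from the start
            have ht1pos : 0 < t1 := by
              rcases eq_or_lt_of_le ht10 with h | h
              · exfalso
                rw [← h, hzero ψ hψ, map_zero, hmHψ] at hpt1
                norm_num at hpt1
              · exact h
            have : ιf ψ' = rj j (ιf ψ) := by
              refine hdir ψ' hψ' (rj j (ιf ψ)) ⟨min t t1, lt_min ht ht1pos, fun s hs hsc => ?_⟩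
              rw [heqmid s (by rw [← hc0]; exact hs.le) (hsc.trans (min_le_right _ _)),
                ← hc0, hzero ψ hψ, sub_zero, zero_add,
                hlin s hs.le (hsc.trans (min_le_left _ _)), map_smul]
            rw [this, hιψ]
          · -- t0 > 0 : initial direction preserved, and pairing must vanish
            have hιeq : ιf ψ' = ιf ψ := by
              refine hdir ψ' hψ' (ιf ψ) ⟨min t t0, lt_min ht hc0, fun s hs hsc => ?_⟩
              rw [heq0 s hs.le (hsc.trans (min_le_right _ _)),
                hlin s hs.le (hsc.trans (min_le_left _ _))]
            have h00 : pair j (ιf η) = 0 := by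
              have := hnonneg ψ' hψ' hmHψ'
              rw [hιeq, hιψ] at this
              linarith
            rw [hιeq, hιψ, hrj, h00, zero_smul, sub_zero]
end

section
/- Let λ ∈ P⁰₊ and η ∈ B(λ)_cl with e_j η ≠ 0 and (ι(η))(h_j) ≤ 0. Then Deg_λ(e_j^max η) = Deg_λ(η) − ε_0(η) − (ι(η))(h_0) if j = 0, and Deg_λ(e_j^max η) = Deg_λ(η) if j ≠ 0. -/
section IterOpt

variable {β : Type*} {g : β → Option β}

@[simp]
theorem iterOpt_zero (b : β) : iterOpt g 0 b = some b := rfl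

@[simp]
theorem iterOpt_one (b : β) : iterOpt g 1 b = g b := rfl

theorem iterOpt_succ_eq_some_iff {n : ℕ} {b c : β} :
    iterOpt g (n + 1) b = some c ↔ ∃ a, iterOpt g n b = some a ∧ g a = some c :=
  Option.bind_eq_some_iff

theorem iterOpt_mem {S : Set β} (hS : ∀ x ∈ S, ∀ y, g x = some y → y ∈ S)
    {b : β} (hb : b ∈ S) {n : ℕ} {c : β} (hc : iterOpt g n b = some c) : c ∈ S := by
  induction n generalizing c with
  | zero => exact Option.some_injective _ hc ▸ hb
  | succ n ih =>
    obtain ⟨a, ha, hac⟩ := iterOpt_succ_eq_some_iff.1 hc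
    exact hS a (ih ha) c hac

theorem iterOpt_apply_eq_sub {f : β → ℤ} {b : β} {n : ℕ}
    (hstep : ∀ k < n, ∀ x y, iterOpt g k b = some x → g x = some y → f y = f x - 1)
    {c : β} (hc : iterOpt g n b = some c) : f c = f b - n := by
  induction n generalizing c with
  | zero => simp_all
  | succ n ih =>
    obtain ⟨a, ha, hac⟩ := iterOpt_succ_eq_some_iff.1 hc
    rw [hstep n n.lt_succ_self a c ha hac,
      ih (fun k hk => hstep k (Nat.lt_succ_of_lt hk)) ha]
    push_cast
    ring

end IterOpt

theorem stmt_15_general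
    {Hc : Type*}
    {I : Type*} (i0 : I)      -- the affine node `0`
    (Bcl : Set (ℝ → Hc))
    (E : I → (ℝ → Hc) → Option (ℝ → Hc))
    (hEcl : ∀ j, ∀ η ∈ Bcl, ∀ η', E j η = some η' → η' ∈ Bcl)
    (ε : I → (ℝ → Hc) → ℕ)
    (hεiter : ∀ j, ∀ η ∈ Bcl, ∀ l : ℕ, iterOpt (E j) l η ≠ none ↔ l ≤ ε j η)
    (ιf : (ℝ → Hc) → Hc)
    (pairc : Hc → I → ℤ) (rc : I → Hc → Hc)
    (Deg : (ℝ → Hc) → ℤ)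
    -- one-step degree formulas
    (hdeg0a : ∀ η ∈ Bcl, ∀ η', E i0 η = some η' → ιf η' = ιf η →
        Deg η' = Deg η - 1)
    (hdeg0b : ∀ η ∈ Bcl, ∀ η', E i0 η = some η' → ιf η' = rc i0 (ιf η) →
        Deg η' = Deg η - pairc (ιf η) i0 - 1)
    (hdegj : ∀ j, j ≠ i0 → ∀ η ∈ Bcl, ∀ η', E j η = some η' → Deg η' = Deg η)
    -- initial-direction facts
    (hinit2 : ∀ j, ∀ η ∈ Bcl, ∀ l : ℕ, l < ε j η →
        ∀ ψ, iterOpt (E j) l η = some ψ → ιf ψ = ιf η)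
    (hinit3 : ∀ j, ∀ η ∈ Bcl, pairc (ιf η) j ≤ 0 →
        ∀ ψ, iterOpt (E j) (ε j η) η = some ψ → ιf ψ = rc j (ιf η))
    (η : ℝ → Hc) (hη : η ∈ Bcl) (j : I)
    (hEne : E j η ≠ none) (hιneg : pairc (ιf η) j ≤ 0) :
    ∀ ψ, iterOpt (E j) (ε j η) η = some ψ →
      (j = i0 → Deg ψ = Deg η - (ε i0 η : ℤ) - pairc (ιf η) i0) ∧
      (j ≠ i0 → Deg ψ = Deg η) := by
  intro ψ hψ
  have hmem : ∀ k x, iterOpt (E j) k η = some x → x ∈ Bcl :=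
    fun _ _ hx => iterOpt_mem (hEcl j) hη hx
  refine ⟨?_, fun hj => (iterOpt_mem (S := {x | x ∈ Bcl ∧ Deg x = Deg η})
    (fun x hx y hxy => ⟨hEcl j x hx.1 y hxy, (hdegj j hj x hx.1 y hxy).trans hx.2⟩)
    ⟨hη, rfl⟩ hψ).2⟩
  rintro rfl
  obtain ⟨m, hm⟩ : ∃ m, ε j η = m + 1 :=
    Nat.exists_eq_add_of_le' ((hεiter j η hη 1).1 (by simpa using hEne))
  obtain ⟨φ, hφ, hφψ⟩ := iterOpt_succ_eq_some_iff.1 (hm ▸ hψ)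
  have hιφ : ιf φ = ιf η := hinit2 j η hη m (by omega) φ hφ
  -- before the last step ι is unchanged, so every step lowers the degree by one
  have hDegφ : Deg φ = Deg η - m := iterOpt_apply_eq_sub (fun k hk x y hx hxy =>
    hdeg0a x (hmem k x hx) y hxy <| by
      rw [hinit2 j η hη (k + 1) (by omega) y (iterOpt_succ_eq_some_iff.2 ⟨x, hx, hxy⟩),
        hinit2 j η hη k (by omega) x hx]) hφ
  have hDegψ := hdeg0b φ (hmem m φ hφ) ψ hφψ (by rw [hinit3 j η hη hιneg ψ hψ, hιφ])
  rw [hDegψ, hDegφ, hιφ, hm]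
  push_cast
  ring

/-- Behavior of the degree function under `e_j^max`: if `e_j η ≠ 0` and
`(ι(η))(h_j) ≤ 0`, then `Deg_λ(e_0^max η) = Deg_λ(η) - ε_0(η) - (ι(η))(h_0)`
and `Deg_λ(e_j^max η) = Deg_λ(η)` for `j ≠ 0`. -/
theorem stmt_15
    {Hc : Type*} [AddCommGroup Hc] [Module ℝ Hc]
    {I : Type*} (i0 : I)      -- the affine node `0`
    (Bcl : Set (ℝ → Hc))
    (E : I → (ℝ → Hc) → Option (ℝ → Hc))
    (hEcl : ∀ j, ∀ η ∈ Bcl, ∀ η', E j η = some η' → η' ∈ Bcl)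
    (ε : I → (ℝ → Hc) → ℕ)
    (hεiter : ∀ j, ∀ η ∈ Bcl, ∀ l : ℕ, iterOpt (E j) l η ≠ none ↔ l ≤ ε j η)
    (ιf : (ℝ → Hc) → Hc)
    (pairc : Hc → I → ℤ) (rc : I → Hc → Hc)
    (Deg : (ℝ → Hc) → ℤ)
    -- one-step degree formulas
    (hdich : ∀ η ∈ Bcl, ∀ η', E i0 η = some η' →
        ιf η' = ιf η ∨ ιf η' = rc i0 (ιf η))
    (hdeg0a : ∀ η ∈ Bcl, ∀ η', E i0 η = some η' → ιf η' = ιf η →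
        Deg η' = Deg η - 1)
    (hdeg0b : ∀ η ∈ Bcl, ∀ η', E i0 η = some η' → ιf η' = rc i0 (ιf η) →
        Deg η' = Deg η - pairc (ιf η) i0 - 1)
    (hdegj : ∀ j, j ≠ i0 → ∀ η ∈ Bcl, ∀ η', E j η = some η' → Deg η' = Deg η)
    -- initial-direction facts
    (hinit2 : ∀ j, ∀ η ∈ Bcl, ∀ l : ℕ, l < ε j η →
        ∀ ψ, iterOpt (E j) l η = some ψ → ιf ψ = ιf η)
    (hinit3 : ∀ j, ∀ η ∈ Bcl, pairc (ιf η) j ≤ 0 →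
        ∀ ψ, iterOpt (E j) (ε j η) η = some ψ → ιf ψ = rc j (ιf η))
    (hinit1 : ∀ j, ∀ η ∈ Bcl, E j η = none → 0 ≤ pairc (ιf η) j)
    (η : ℝ → Hc) (hη : η ∈ Bcl) (j : I)
    (hEne : E j η ≠ none) (hιneg : pairc (ιf η) j ≤ 0) :
    ∀ ψ, iterOpt (E j) (ε j η) η = some ψ →
      (j = i0 → Deg ψ = Deg η - (ε i0 η : ℤ) - pairc (ιf η) i0) ∧
      (j ≠ i0 → Deg ψ = Deg η) :=
  stmt_15_general i0 Bcl E hEcl ε hεiter ιf pairc rc Deg hdeg0a hdeg0b hdegj hinit2 hinit3 η hη j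
    hEne hιneg
end
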